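/- Let n ≥ 3, let k₀ > 0 and let γ₁ satisfy k₀ ≤ γ₁ ≤ 1/2. Define Π₁ = span{e₁, …, e_{n−1}} and Π₂ = span{e₁, …, e_{n−2}, (e_{n−1} + γ₁ eₙ)/√(1+γ₁²)} in ℝⁿ. There exists a constant C > 0, depending only on k₀, such that if a real symmetric n×n matrix g satisfies |⟨g v, w⟩| ≤ ε for all unit vectors v, w ∈ Π₁ and all unit vectors v, w ∈ Π₂, then |g_{i,n}| ≤ C ε for every i = 1, …, n−2, and |2 g_{n−1,n} + γ₁ g_{n,n}| ≤ C ε. -/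

import Mathlib

/-!
Testing the form `⟨g ·, ·⟩` on coordinate vectors of `Π₁` bounds `g_{i,n-1}` and `g_{n-1,n-1}`.
The vector `v = e_{n-1} + γ₁ eₙ` lies in `Π₂` and has norm at most `3/2`, so testing on `v, eᵢ`
and on `v, v` bounds `g_{i,n-1} + γ₁ g_{i,n}` and `g_{n-1,n-1} + γ₁ (2 g_{n-1,n} + γ₁ g_{n,n})`
by `3ε`. Subtracting the first bounds and dividing by `γ₁ ≥ k₀` gives `C = 4 / k₀`.
-/

open Matrix
open scoped RealInnerProductSpace

lemma abs_inner_apply_le_of_forall_norm_eq_one {E : Type*} [NormedAddCommGroup E]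
    [InnerProductSpace ℝ E] {T : E →L[ℝ] E} {P : Submodule ℝ E} {ε : ℝ}
    (h : ∀ v w : E, v ∈ P → w ∈ P → ‖v‖ = 1 → ‖w‖ = 1 → |⟪T v, w⟫| ≤ ε)
    {v w : E} (hv : v ∈ P) (hw : w ∈ P) : |⟪T v, w⟫| ≤ ε * ‖v‖ * ‖w‖ := by
  rcases eq_or_ne v 0 with rfl | hv0
  · simp
  rcases eq_or_ne w 0 with rfl | hw0
  · simp
  have hunit := h _ _ (P.smul_mem ‖v‖⁻¹ hv) (P.smul_mem ‖w‖⁻¹ hw)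
    (norm_smul_inv_norm hv0) (norm_smul_inv_norm hw0)
  rw [map_smul, real_inner_smul_left, real_inner_smul_right, abs_mul, abs_mul,
    abs_inv, abs_inv, abs_norm, abs_norm, inv_mul_le_iff₀ (by positivity),
    inv_mul_le_iff₀ (by positivity)] at hunit
  linarith

lemma inner_toEuclideanCLM_single_single {ι : Type*} [Fintype ι] [DecidableEq ι]
    (g : Matrix ι ι ℝ) (i j : ι) :
    ⟪toEuclideanCLM (𝕜 := ℝ) g (EuclideanSpace.single i 1), EuclideanSpace.single j 1⟫ =
      g j i := by
  rw [real_inner_comm, inner_toEuclideanCLM]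
  simp

lemma abs_le_div_mul_of_abs_add_mul_le {x y γ k ε c : ℝ} (hk : 0 < k) (hkγ : k ≤ γ)
    (hx : |x| ≤ ε) (hxy : |x + γ * y| ≤ c * ε) : |y| ≤ (1 + c) / k * ε := by
  have hε : 0 ≤ ε := (abs_nonneg x).trans hx
  have hγy : γ * |y| ≤ (1 + c) * ε := by
    calc γ * |y| = |x + γ * y - x| := by
          rw [add_sub_cancel_left, abs_mul, abs_of_pos (hk.trans_le hkγ)]
      _ ≤ |x + γ * y| + |x| := abs_sub _ _
      _ ≤ (1 + c) * ε := by linarith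
  rw [div_mul_eq_mul_div, le_div_iff₀ hk]
  nlinarith [abs_nonneg y]

section SingleAddSmulSingle

variable {ι : Type*} [Fintype ι] [DecidableEq ι] (a b : ι) (γ : ℝ)

lemma norm_single_add_smul_single_le :
    ‖EuclideanSpace.single a (1 : ℝ) + γ • EuclideanSpace.single b 1‖ ≤ 1 + |γ| :=
  (norm_add_le _ _).trans_eq <| by simp [norm_smul]

variable (g : Matrix ι ι ℝ)

lemma inner_toEuclideanCLM_single_add_smul_single (j : ι) :
    ⟪toEuclideanCLM (𝕜 := ℝ) g (EuclideanSpace.single a 1 + γ • EuclideanSpace.single b 1),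
      EuclideanSpace.single j 1⟫ = g j a + γ * g j b := by
  simp only [map_add, map_smul, inner_add_left, real_inner_smul_left,
    inner_toEuclideanCLM_single_single]

lemma inner_toEuclideanCLM_single_add_smul_single_self (hg : g.IsSymm) :
    ⟪toEuclideanCLM (𝕜 := ℝ) g (EuclideanSpace.single a 1 + γ • EuclideanSpace.single b 1),
      EuclideanSpace.single a 1 + γ • EuclideanSpace.single b 1⟫ =
      g a a + γ * (2 * g a b + γ * g b b) := by
  simp only [inner_add_right, real_inner_smul_right, inner_toEuclideanCLM_single_add_smul_single,
    hg.apply b a]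
  ring

end SingleAddSmulSingle

/-- For `k₀ > 0` there is `C > 0` depending only on `k₀` such that:
if `k₀ ≤ γ₁ ≤ 1/2`, `Π₁ = span{e₁,…,e_{n-1}}`,
`Π₂ = span{e₁,…,e_{n-2}, (e_{n-1}+γ₁eₙ)/√(1+γ₁²)}`, and the symmetric matrix `g`
satisfies `|⟨g v, w⟩| ≤ ε` for all unit `v, w ∈ Π₁` and all unit `v, w ∈ Π₂`, then
`|g_{i,n}| ≤ C ε` for `i = 1,…,n-2` and `|2 g_{n-1,n} + γ₁ g_{n,n}| ≤ C ε`. -/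
theorem stmt10 (k₀ : ℝ) (hk₀ : 0 < k₀) :
    ∃ C : ℝ, 0 < C ∧
      ∀ (n : ℕ) (hn : 3 ≤ n) (γ₁ : ℝ), k₀ ≤ γ₁ → γ₁ ≤ 1 / 2 →
      ∀ Pi1 Pi2 : Submodule ℝ (EuclideanSpace ℝ (Fin n)),
        Pi1 = Submodule.span ℝ
          {v : EuclideanSpace ℝ (Fin n) |
            ∃ i : Fin n, (i : ℕ) < n - 1 ∧ v = EuclideanSpace.single i (1 : ℝ)} →
        Pi2 = Submodule.span ℝ
          ({v : EuclideanSpace ℝ (Fin n) |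
              ∃ i : Fin n, (i : ℕ) < n - 2 ∧ v = EuclideanSpace.single i (1 : ℝ)} ∪
            {(1 / Real.sqrt (1 + γ₁ ^ 2)) •
              (EuclideanSpace.single (⟨n - 2, by omega⟩ : Fin n) (1 : ℝ) +
                γ₁ • EuclideanSpace.single (⟨n - 1, by omega⟩ : Fin n) (1 : ℝ))}) →
      ∀ (ε : ℝ) (g : Matrix (Fin n) (Fin n) ℝ), g.IsSymm →
        (∀ v w : EuclideanSpace ℝ (Fin n), v ∈ Pi1 → w ∈ Pi1 → ‖v‖ = 1 → ‖w‖ = 1 →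
          |⟪Matrix.toEuclideanCLM (𝕜 := ℝ) g v, w⟫| ≤ ε) →
        (∀ v w : EuclideanSpace ℝ (Fin n), v ∈ Pi2 → w ∈ Pi2 → ‖v‖ = 1 → ‖w‖ = 1 →
          |⟪Matrix.toEuclideanCLM (𝕜 := ℝ) g v, w⟫| ≤ ε) →
        (∀ i : Fin n, (i : ℕ) < n - 2 →
            |g i (⟨n - 1, by omega⟩ : Fin n)| ≤ C * ε) ∧
          |2 * g (⟨n - 2, by omega⟩ : Fin n) (⟨n - 1, by omega⟩ : Fin n) +
              γ₁ * g (⟨n - 1, by omega⟩ : Fin n) (⟨n - 1, by omega⟩ : Fin n)| ≤ C * ε := by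
  refine ⟨(1 + 3) / k₀, by positivity, ?_⟩
  intro n hn γ₁ hkγ hγ Pi1 Pi2 hPi1 hPi2 ε g hg h1 h2
  set a : Fin n := ⟨n - 2, by omega⟩
  set b : Fin n := ⟨n - 1, by omega⟩
  set v := EuclideanSpace.single a (1 : ℝ) + γ₁ • EuclideanSpace.single b 1
  have single_mem1 (i : Fin n) (hi : (i : ℕ) < n - 1) : EuclideanSpace.single i 1 ∈ Pi1 :=
    hPi1 ▸ Submodule.subset_span ⟨i, hi, rfl⟩
  have single_mem2 (i : Fin n) (hi : (i : ℕ) < n - 2) : EuclideanSpace.single i 1 ∈ Pi2 :=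
    hPi2 ▸ Submodule.subset_span (Or.inl ⟨i, hi, rfl⟩)
  have hv : v ∈ Pi2 := by
    have hs : Real.sqrt (1 + γ₁ ^ 2) ≠ 0 := (Real.sqrt_pos.2 (by positivity)).ne'
    have hu := Pi2.smul_mem (Real.sqrt (1 + γ₁ ^ 2))
      (hPi2 ▸ Submodule.subset_span (Or.inr rfl) : (1 / Real.sqrt (1 + γ₁ ^ 2)) • v ∈ Pi2)
    rwa [smul_smul, mul_one_div_cancel hs, one_smul] at hu
  have hv_norm : ‖v‖ ≤ 3 / 2 := (norm_single_add_smul_single_le a b γ₁).trans <| by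
    rw [abs_of_pos (hk₀.trans_le hkγ)]; linarith
  have h1_single (i j : Fin n) (hi : (i : ℕ) < n - 1) (hj : (j : ℕ) < n - 1) : |g j i| ≤ ε := by
    simpa [inner_toEuclideanCLM_single_single] using
      h1 _ _ (single_mem1 i hi) (single_mem1 j hj) (by simp) (by simp)
  have ha : (a : ℕ) < n - 1 := by simp [a]; omega
  have hε : 0 ≤ ε := (abs_nonneg _).trans (h1_single a a ha ha)
  constructor
  · intro i hi
    refine abs_le_div_mul_of_abs_add_mul_le hk₀ hkγ (h1_single a i ha (by omega)) ?_
    have := abs_inner_apply_le_of_forall_norm_eq_one h2 hv (single_mem2 i hi)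
    rw [inner_toEuclideanCLM_single_add_smul_single] at this
    exact this.trans (by simp; nlinarith)
  · refine abs_le_div_mul_of_abs_add_mul_le hk₀ hkγ (h1_single a a ha ha) ?_
    have := abs_inner_apply_le_of_forall_norm_eq_one h2 hv hv
    rw [inner_toEuclideanCLM_single_add_smul_single_self a b γ₁ g hg] at this
    exact this.trans (by nlinarith [mul_le_mul hv_norm hv_norm (norm_nonneg v) (by norm_num)])
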